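/- Let G be a directed graph with an injective ranking r : V → ℕ, and let s, t be vertices with a path from s to t. Then SPCnt_G(s,t) = Σ N_h(s,h) · N_h(h,t), where the sum ranges over all vertices h such that paths from s to h and from h to t exist and sd_G(s,h) + sd_G(h,t) = sd_G(s,t). (This is the correctness of the 2-hop labeling query evaluation: scanning the common hubs h achieving the minimum of sd(s,h) + sd(h,t) and summing the products of the stored counts returns the exact number of shortest paths from s to t.) -/

import Mathlib

open Classical

/-- `p` is a path from `s` to `t` in the directed graph with edge relation `E`:
`p` is the list of visited vertices, starting at `s`, ending at `t`, and every
consecutive pair of vertices is an edge. -/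
def IsWalk {V : Type*} (E : V → V → Prop) (s t : V) (p : List V) : Prop :=
  p.Chain' E ∧ p.head? = some s ∧ p.getLast? = some t

/-- The length of a path given by its vertex list `p`, i.e. its number of edges. -/
def walkLen {V : Type*} (p : List V) : ℕ := p.length - 1

/-- A path from `s` to `t` exists. -/
def Reach {V : Type*} (E : V → V → Prop) (s t : V) : Prop := ∃ p, IsWalk E s t p

/-- The shortest distance from `s` to `t`: the minimum length of a path from `s` to `t`. -/
noncomputable def sd {V : Type*} (E : V → V → Prop) (s t : V) : ℕ :=
  sInf {n | ∃ p, IsWalk E s t p ∧ walkLen p = n}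

/-- The set of shortest paths from `s` to `t`. -/
noncomputable def ShortestPaths {V : Type*} (E : V → V → Prop) (s t : V) : Set (List V) :=
  {p | IsWalk E s t p ∧ walkLen p = sd E s t}

/-- The number of shortest paths from `s` to `t`. -/
noncomputable def SPCnt {V : Type*} (E : V → V → Prop) (s t : V) : ℕ :=
  (ShortestPaths E s t).ncard

/-- The path `p` traverses the edge `(a, b)`: some consecutive pair of its vertices is `(a, b)`. -/
def Traverses {V : Type*} (p : List V) (a b : V) : Prop := (a, b) ∈ p.zip p.tail

/-- `Nhub E r h s t` is the number of shortest paths from `s` to `t` whose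
maximum-rank vertex (w.r.t. the ranking `r`) is `h`. -/
noncomputable def Nhub {V : Type*} (E : V → V → Prop) (r : V → ℕ) (h s t : V) : ℕ :=
  {p ∈ ShortestPaths E s t | h ∈ p ∧ ∀ x ∈ p, r x ≤ r h}.ncard

section Aux

variable {V : Type*} {E : V → V → Prop} {s t : V} {p : List V}

lemma IsWalk.ne_nil (hw : IsWalk E s t p) : p ≠ [] := by
  rintro rfl
  obtain ⟨-, hh, -⟩ := hw
  simp at hh

lemma IsWalk.length_pos (hw : IsWalk E s t p) : 1 ≤ p.length :=
  List.length_pos_iff.mpr hw.ne_nil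

lemma sd_le_of_walk (hw : IsWalk E s t p) : sd E s t ≤ walkLen p :=
  Nat.sInf_le ⟨p, hw, rfl⟩

lemma exists_shortest (h : Reach E s t) :
    ∃ p, IsWalk E s t p ∧ walkLen p = sd E s t := by
  obtain ⟨p, hp⟩ := h
  have hne : {n | ∃ p, IsWalk E s t p ∧ walkLen p = n}.Nonempty := ⟨walkLen p, p, hp, rfl⟩
  exact Nat.sInf_mem hne

lemma walk_take (hw : IsWalk E s t p) {i : ℕ} (hi : i < p.length) :
    IsWalk E s (p[i]) (p.take (i + 1)) := by
  obtain ⟨hc, hh, hl⟩ := hw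
  refine ⟨hc.take _, ?_, ?_⟩
  · rw [List.head?_eq_getElem?, List.getElem?_take, if_pos (Nat.succ_pos i)]
    rw [List.head?_eq_getElem?] at hh; exact hh
  · have hlen : (p.take (i + 1)).length = i + 1 := by
      rw [List.length_take]; omega
    rw [List.getLast?_eq_getElem?, hlen, Nat.add_sub_cancel, List.getElem?_take,
      if_pos (Nat.lt_succ_self i), List.getElem?_eq_getElem hi]

lemma walk_drop (hw : IsWalk E s t p) {i : ℕ} (hi : i < p.length) :
    IsWalk E (p[i]) t (p.drop i) := by
  obtain ⟨hc, hh, hl⟩ := hw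
  refine ⟨hc.drop _, ?_, ?_⟩
  · rw [List.head?_eq_getElem?, List.getElem?_drop, Nat.add_zero,
      List.getElem?_eq_getElem hi]
  · rw [List.getLast?_eq_getElem?, List.length_drop, List.getElem?_drop]
    have harith : i + (p.length - i - 1) = p.length - 1 := by omega
    rw [harith]
    rw [List.getLast?_eq_getElem?] at hl; exact hl

lemma walkLen_take {i : ℕ} (hi : i < p.length) : walkLen (p.take (i + 1)) = i := by
  simp only [walkLen, List.length_take]; omega

lemma walkLen_drop (i : ℕ) : walkLen (p.drop i) = p.length - 1 - i := by
  simp only [walkLen, List.length_drop]; omega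

lemma walk_append {h : V} {p q : List V} (hp : IsWalk E s h p) (hq : IsWalk E h t q) :
    IsWalk E s t (p ++ q.tail) ∧ walkLen (p ++ q.tail) = walkLen p + walkLen q := by
  obtain ⟨hc, hh, hl⟩ := hp
  obtain ⟨qc, qh, ql⟩ := hq
  cases q with
  | nil => simp at qh
  | cons a q' =>
    simp only [List.head?_cons, Option.some.injEq] at qh
    subst qh
    unfold List.Chain' at qc; rw [List.isChain_cons] at qc
    have hplen : 1 ≤ p.length := List.length_pos_iff.mpr (by rintro rfl; simp at hh)
    constructor
    · refine ⟨?_, ?_, ?_⟩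
      · unfold List.Chain'; rw [List.isChain_append]
        refine ⟨hc, qc.2, ?_⟩
        intro x hx y hy
        rw [hl] at hx
        simp only [Option.mem_def, Option.some.injEq] at hx
        subst hx
        exact qc.1 y hy
      · rw [List.head?_append, hh]; rfl
      · show (p ++ q').getLast? = some t
        cases q' with
        | nil =>
          simp only [List.getLast?_singleton, Option.some.injEq] at ql
          subst ql
          simpa using hl
        | cons b q'' =>
          rw [List.getLast?_cons_cons] at ql
          rw [List.getLast?_append, ql]; rfl
    · show walkLen (p ++ q') = _
      simp only [walkLen, List.length_append, List.length_cons]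
      omega

lemma reach_of_mem (hw : IsWalk E s t p) {x : V} (hx : x ∈ p) :
    Reach E s x ∧ Reach E x t := by
  obtain ⟨i, hi, rfl⟩ := List.mem_iff_getElem.mp hx
  exact ⟨⟨_, walk_take hw hi⟩, ⟨_, walk_drop hw hi⟩⟩

lemma sd_triangle {h : V} (hsh : Reach E s h) (hht : Reach E h t) :
    sd E s t ≤ sd E s h + sd E h t := by
  obtain ⟨p, hp, hpl⟩ := exists_shortest hsh
  obtain ⟨q, hq, hql⟩ := exists_shortest hht
  obtain ⟨hw, hlen⟩ := walk_append hp hq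
  calc sd E s t ≤ walkLen (p ++ q.tail) := sd_le_of_walk hw
    _ = _ := by rw [hlen, hpl, hql]

lemma ncard_sprod {α β : Type*} (A : Set α) (B : Set β) :
    (A ×ˢ B).ncard = A.ncard * B.ncard := by
  rw [← Nat.card_coe_set_eq, ← Nat.card_coe_set_eq, ← Nat.card_coe_set_eq,
    Nat.card_congr (Equiv.Set.prod A B), Nat.card_prod]

end Aux

/-- Correctness of the 2-hop labeling query evaluation: summing, over all hubs `h`
on shortest paths (i.e. with `sd(s,h) + sd(h,t) = sd(s,t)`), the products of the
stored counts returns the exact number of shortest paths from `s` to `t`. -/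
theorem stmt_16 {V : Type*} [Fintype V] (E : V → V → Prop) (hE : ∀ v, ¬ E v v)
    (r : V → ℕ) (hr : Function.Injective r) (s t : V) (hst : Reach E s t) :
    SPCnt E s t = ∑ h : V,
      if Reach E s h ∧ Reach E h t ∧ sd E s h + sd E h t = sd E s t
        then Nhub E r h s h * Nhub E r h h t else 0 := by
  classical
  set S : V → Set (List V) :=
    fun h => {p ∈ ShortestPaths E s t | h ∈ p ∧ ∀ x ∈ p, r x ≤ r h} with hS
  -- finiteness
  have hfin : ∀ s' t' : V, {p ∈ ShortestPaths E s' t' | _root_.True}.Finite := by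
    intro s' t'
    exact ((List.finite_length_le V (sd E s' t' + 1)).subset
      (fun p hp => by
        have h1 := hp.1.1.length_pos
        have h2 := hp.1.2
        simp only [walkLen] at h2
        simp only [Set.mem_setOf_eq]
        omega))
  have hSPfin : (ShortestPaths E s t).Finite := by
    have := hfin s t
    simpa using this
  have hfinS : ∀ h, (S h).Finite := fun h =>
    hSPfin.subset (fun p hp => hp.1)
  have hfinN : ∀ (h s' t' : V),
      ({p ∈ ShortestPaths E s' t' | h ∈ p ∧ ∀ x ∈ p, r x ≤ r h} : Set (List V)).Finite := by
    intro h s' t'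
    exact (hfin s' t').subset (fun p hp => ⟨hp.1, trivial⟩)
  -- Step A : partition by hub
  have hcover : ∀ p ∈ ShortestPaths E s t, ∃ h, p ∈ S h := by
    intro p hp
    have hne : p ≠ [] := hp.1.ne_nil
    obtain ⟨m, hm⟩ : ∃ m, p.argmax r = some m := by
      cases hargmax : p.argmax r with
      | none => exact absurd (List.argmax_eq_none.mp hargmax) hne
      | some a => exact ⟨a, rfl⟩
    have hm' : m ∈ p.argmax r := Option.mem_def.mpr hm
    exact ⟨m, hp, List.argmax_mem hm', fun x hx => List.le_of_mem_argmax hx hm'⟩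
  have hSeq : hSPfin.toFinset = Finset.univ.biUnion (fun h => (hfinS h).toFinset) := by
    ext p
    simp only [Set.Finite.mem_toFinset, Finset.mem_biUnion, Finset.mem_univ, true_and]
    constructor
    · exact hcover p
    · rintro ⟨h, hp⟩; exact hp.1
  have step1 : SPCnt E s t = ∑ h : V, (S h).ncard := by
    rw [SPCnt, Set.ncard_eq_toFinset_card _ hSPfin, hSeq, Finset.card_biUnion]
    · exact Finset.sum_congr rfl fun h _ =>
        (Set.ncard_eq_toFinset_card _ (hfinS h)).symm
    · intro a _ b _ hab
      rw [Function.onFun, Finset.disjoint_left]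
      intro p hpa hpb
      rw [Set.Finite.mem_toFinset] at hpa hpb
      exact hab (hr (le_antisymm (hpb.2.2 a hpa.2.1) (hpa.2.2 b hpb.2.1)))
  rw [step1]
  refine Finset.sum_congr rfl fun h _ => ?_
  by_cases hcond : Reach E s h ∧ Reach E h t ∧ sd E s h + sd E h t = sd E s t
  · rw [if_pos hcond]
    obtain ⟨hsh, hht, hsum⟩ := hcond
    set A : Set (List V) := {p ∈ ShortestPaths E s h | h ∈ p ∧ ∀ x ∈ p, r x ≤ r h} with hA
    set B : Set (List V) := {p ∈ ShortestPaths E h t | h ∈ p ∧ ∀ x ∈ p, r x ≤ r h} with hB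
    have himg : (fun q : List V × List V => q.1 ++ q.2.tail) '' (A ×ˢ B) = S h := by
      apply Set.Subset.antisymm
      · rintro _ ⟨⟨p, q⟩, hpq, rfl⟩
        obtain ⟨⟨⟨pw, plen⟩, hhp, hpmax⟩, ⟨qw, qlen⟩, hhq, hqmax⟩ := hpq
        obtain ⟨hw, hlen⟩ := walk_append pw qw
        refine ⟨⟨hw, by rw [hlen, plen, qlen, hsum]⟩, ?_, ?_⟩
        · exact List.mem_append_left _ hhp
        · intro x hx
          rcases List.mem_append.mp hx with hx | hx
          · exact hpmax x hx
          · exact hqmax x (List.mem_of_mem_tail hx)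
      · intro m hm
        obtain ⟨⟨mw, mlen⟩, hhm, hmax⟩ := hm
        obtain ⟨i, hi, hgi⟩ := List.mem_iff_getElem.mp hhm
        have wt : IsWalk E s h (m.take (i + 1)) := by
          have := walk_take mw hi; rwa [hgi] at this
        have wd : IsWalk E h t (m.drop i) := by
          have := walk_drop mw hi; rwa [hgi] at this
        have lt : walkLen (m.take (i + 1)) = i := walkLen_take hi
        have ld : walkLen (m.drop i) = m.length - 1 - i := walkLen_drop i
        have h1 : sd E s h ≤ i := by
          have := sd_le_of_walk wt; rwa [lt] at this
        have h2 : sd E h t ≤ m.length - 1 - i := by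
          have := sd_le_of_walk wd; rwa [ld] at this
        have hmlen : walkLen m = m.length - 1 := rfl
        have heq1 : sd E s h = i := by
          rw [hmlen] at mlen; omega
        have heq2 : sd E h t = m.length - 1 - i := by
          rw [hmlen] at mlen; omega
        refine ⟨(m.take (i + 1), m.drop i), ⟨⟨⟨wt, by rw [lt, heq1]⟩, ?_, ?_⟩,
          ⟨⟨wd, by rw [ld, heq2]⟩, ?_, ?_⟩⟩, ?_⟩
        · exact List.mem_of_mem_getLast? (by rw [wt.2.2]; rfl)
        · intro x hx; exact hmax x (List.take_subset _ _ hx)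
        · exact List.mem_of_mem_head? (by rw [wd.2.1]; rfl)
        · intro x hx; exact hmax x (List.drop_subset _ _ hx)
        · show m.take (i + 1) ++ (m.drop i).tail = m
          rw [List.tail_drop, List.take_append_drop]
    have hinj : Set.InjOn (fun q : List V × List V => q.1 ++ q.2.tail) (A ×ˢ B) := by
      rintro ⟨p, q⟩ hpq ⟨p', q'⟩ hpq' heq
      simp only at heq
      obtain ⟨⟨⟨pw, plen⟩, -⟩, ⟨qw, qlen⟩, -⟩ := hpq
      obtain ⟨⟨⟨pw', plen'⟩, -⟩, ⟨qw', qlen'⟩, -⟩ := hpq'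
      dsimp only at pw plen pw' plen' qw qlen qw' qlen'
      have hplen : p.length = p'.length := by
        have e1 := pw.length_pos
        have e2 := pw'.length_pos
        simp only [walkLen] at plen plen'
        omega
      obtain ⟨rfl, htl⟩ := List.append_inj heq hplen
      cases q with
      | nil => exact absurd rfl qw.ne_nil
      | cons a l =>
        cases q' with
        | nil => exact absurd rfl qw'.ne_nil
        | cons a' l' =>
          have ha : a = h := by
            have := qw.2.1; simpa using this
          have ha' : a' = h := by
            have := qw'.2.1; simpa using this
          simp only [List.tail_cons] at htl
          subst ha; subst ha'; subst htl
          rfl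
    have : (S h).ncard = (A ×ˢ B).ncard := by
      rw [← himg, Set.ncard_image_of_injOn hinj]
    rw [this, ncard_sprod, Nhub, Nhub]
  · rw [if_neg hcond]
    have hempty : S h = ∅ := by
      rw [Set.eq_empty_iff_forall_notMem]
      intro m hm
      obtain ⟨⟨mw, mlen⟩, hhm, -⟩ := hm
      obtain ⟨i, hi, hgi⟩ := List.mem_iff_getElem.mp hhm
      have wt : IsWalk E s h (m.take (i + 1)) := by
        have := walk_take mw hi; rwa [hgi] at this
      have wd : IsWalk E h t (m.drop i) := by
        have := walk_drop mw hi; rwa [hgi] at this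
      have h1 : sd E s h ≤ i := by
        have := sd_le_of_walk wt; rwa [walkLen_take hi] at this
      have h2 : sd E h t ≤ m.length - 1 - i := by
        have := sd_le_of_walk wd; rwa [walkLen_drop i] at this
      have h3 : sd E s t ≤ sd E s h + sd E h t := sd_triangle ⟨_, wt⟩ ⟨_, wd⟩
      have hmlen : walkLen m = m.length - 1 := rfl
      rw [hmlen] at mlen
      exact hcond ⟨⟨_, wt⟩, ⟨_, wd⟩, by omega⟩
    rw [hempty, Set.ncard_empty]
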